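/- Let x be a real number with x > 1, for each positive integer n let r(n) be the unique positive real solution of t(e^t + x) = 2 n x log x, and set λ_0(n) = x e^{−r(n)}, a_0(n) = (1 + λ_0(n))²/(4 n λ_0(n) log x), χ(n) = log n/(n λ_0(n)). Define the second steepest-descent coefficient c_{20}(n) = Q_2(a_0(n), λ_0(n)) χ(n)²/(216 (1 + 2 a_0(n))⁶), where Q_2(a, ξ) = P_{21}(ξ) − 6 a P_{22}(ξ) + 3 a² P_{23}(ξ) − 48 a³ P_{24}(ξ) with P_{21}(ξ) = (1 + ξ + ξ²)², P_{22}(ξ) = 13 + 5ξ − 10ξ² + 5ξ³ + 13ξ⁴, P_{23}(ξ) = 67 − 328ξ + 278ξ² − 328ξ³ + 67ξ⁴, P_{24}(ξ) = 1 − 26ξ + 66ξ² − 26ξ³ + ξ⁴. Then c_{20}(n) → (1/54) (log x)² as n → ∞. -/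

import Mathlib

open Filter

def P21 (ξ : ℝ) : ℝ := (1 + ξ + ξ ^ 2) ^ 2

def P22 (ξ : ℝ) : ℝ := 13 + 5 * ξ - 10 * ξ ^ 2 + 5 * ξ ^ 3 + 13 * ξ ^ 4

def P23 (ξ : ℝ) : ℝ := 67 - 328 * ξ + 278 * ξ ^ 2 - 328 * ξ ^ 3 + 67 * ξ ^ 4

def P24 (ξ : ℝ) : ℝ := 1 - 26 * ξ + 66 * ξ ^ 2 - 26 * ξ ^ 3 + ξ ^ 4

def Q2 (a ξ : ℝ) : ℝ := P21 ξ - 6 * a * P22 ξ + 3 * a ^ 2 * P23 ξ - 48 * a ^ 3 * P24 ξ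

open Topology Real

/-!
Write `λ = λ₀(n)`, `r = r(n)` and `L = log x`. Multiplying the defining equation of `r` by
`e^{-r}` gives `2 n L λ = r (1 + λ)`, and taking logarithms gives `log n = r + O(log r)`. Since
`r → ∞`, we get `λ → 0`, `a₀ = (1 + λ)/(2r) → 0` and `χ = 2L/(1 + λ) · log n / r → 2L`, so
`c₂₀ → Q₂(0, 0) (2L)²/216 = L²/54`.
-/

theorem Q2_zero_zero : Q2 0 0 = 1 := by
  norm_num [Q2, P21, P22, P23, P24]

theorem continuous_Q2 : Continuous fun p : ℝ × ℝ => Q2 p.1 p.2 := by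
  unfold Q2 P21 P22 P23 P24
  fun_prop

theorem MonotoneOn.tendsto_atTop_of_comp {α : Type*} {l : Filter α} {f : α → ℝ} {g : ℝ → ℝ}
    {a : ℝ} (hg : MonotoneOn g (Set.Ici a)) (hf : ∀ᶠ i in l, a ≤ f i)
    (hgf : Tendsto (g ∘ f) l atTop) : Tendsto f l atTop := by
  refine tendsto_atTop.2 fun b => ?_
  filter_upwards [hf, hgf.eventually_gt_atTop (g (max a b))] with i hai hi
  by_contra! hlt
  exact hi.not_ge (hg hai (le_max_left a b) (hlt.le.trans (le_max_right a b)))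

theorem monotoneOn_mul_exp_add {x : ℝ} (hx : 0 ≤ x) :
    MonotoneOn (fun t => t * (exp t + x)) (Set.Ici 0) := fun _ hs _ ht hst =>
  mul_le_mul hst (by gcongr) (by positivity) ht

theorem tendsto_atTop_of_mul_exp_add_eq {x c : ℝ} {r : ℕ → ℝ} (hx : 0 ≤ x) (hc : 0 < c)
    (hr : ∀ᶠ n : ℕ in atTop, 0 ≤ r n ∧ r n * (exp (r n) + x) = c * n) :
    Tendsto r atTop atTop := by
  refine (monotoneOn_mul_exp_add hx).tendsto_atTop_of_comp (hr.mono fun n hn => hn.1) ?_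
  exact (tendsto_natCast_atTop_atTop.const_mul_atTop hc).congr'
    (hr.mono fun n hn => hn.2.symm)

theorem tendsto_log_mul_div_self {α : Type*} {l : Filter α} {r c : α → ℝ} {c₀ : ℝ}
    (hr : Tendsto r l atTop) (hc : Tendsto c l (𝓝 c₀)) (hc₀ : 0 < c₀) :
    Tendsto (fun i => log (r i * c i) / r i) l (𝓝 0) := by
  have hsum : Tendsto (fun i => log (r i) / r i + log (c i) / r i) l (𝓝 (0 + 0)) :=
    (isLittleO_log_id_atTop.tendsto_div_nhds_zero.comp hr).add
      ((hc.log hc₀.ne').div_atTop hr)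
  rw [add_zero] at hsum
  refine hsum.congr' ?_
  filter_upwards [hr.eventually_gt_atTop 0, hc.eventually (lt_mem_nhds hc₀)] with i hri hci
  rw [log_mul hri.ne' hci.ne', add_div]

theorem tendsto_c20_form {α : Type*} {l : Filter α} {a ξ χ : α → ℝ} {χ₀ : ℝ}
    (ha : Tendsto a l (𝓝 0)) (hξ : Tendsto ξ l (𝓝 0)) (hχ : Tendsto χ l (𝓝 χ₀)) :
    Tendsto (fun i => Q2 (a i) (ξ i) * χ i ^ 2 / (216 * (1 + 2 * a i) ^ 6)) l
      (𝓝 (χ₀ ^ 2 / 216)) := by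
  have hQ : Tendsto (fun i => Q2 (a i) (ξ i)) l (𝓝 1) := by
    simpa only [Q2_zero_zero, Function.comp_def] using
      (continuous_Q2.tendsto (0, 0)).comp (ha.prodMk_nhds hξ)
  have hden : Tendsto (fun i => 216 * (1 + 2 * a i) ^ 6) l (𝓝 (216 * (1 + 2 * 0) ^ 6)) :=
    (((ha.const_mul 2).const_add 1).pow 6).const_mul 216
  have h := (hQ.mul (hχ.pow 2)).div hden (by norm_num)
  rwa [show (1 : ℝ) * χ₀ ^ 2 / (216 * (1 + 2 * 0) ^ 6) = χ₀ ^ 2 / 216 by ring] at h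

section Pointwise

variable {x L r n lam : ℝ}

theorem lam_relation (hlam : lam = x * exp (-r)) (h : r * (exp r + x) = 2 * n * x * L) :
    2 * n * L * lam = r * (1 + lam) := by
  have hexp : exp r * exp (-r) = 1 := by rw [← exp_add, add_neg_cancel, exp_zero]
  rw [hlam]
  linear_combination (-exp (-r)) * h + r * hexp

theorem a0_eq_of_lam_relation (hrel : 2 * n * L * lam = r * (1 + lam)) (hr : r ≠ 0)
    (hlam : 1 + lam ≠ 0) : (1 + lam) ^ 2 / (4 * n * lam * L) = (1 + lam) / (2 * r) := by
  rw [show 4 * n * lam * L = 2 * (2 * n * L * lam) by ring, hrel]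
  field_simp

theorem chi_eq_of_lam_relation (hrel : 2 * n * L * lam = r * (1 + lam)) (hr : r ≠ 0)
    (hL : L ≠ 0) (hlam : 1 + lam ≠ 0) :
    log n / (n * lam) = 2 * L / (1 + lam) * (log n / r) := by
  rw [show n * lam = r * (1 + lam) / (2 * L) by field_simp; linarith]
  field_simp

theorem log_div_eq (hx : 0 < x) (hL : 0 < L) (hr : 0 < r) (hlam : lam = x * exp (-r))
    (h : r * (exp r + x) = 2 * n * x * L) :
    log n / r = 1 + log (r * ((1 + lam) / (2 * x * L))) / r := by
  have hn : n = exp r * (r * ((1 + lam) / (2 * x * L))) := by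
    rw [hlam, exp_neg]
    field_simp
    linear_combination -h
  rw [hn, log_mul (exp_pos r).ne' (by rw [hlam]; positivity), log_exp, add_div,
    div_self hr.ne']

end Pointwise

/-- For a real `x > 1`, with `r(n)` the unique positive solution of `t(e^t + x) = 2 n x log x`,
`λ₀(n) = x e^{−r(n)}`, `a₀(n) = (1 + λ₀(n))²/(4 n λ₀(n) log x)`, `χ(n) = log n/(n λ₀(n))`, the
second steepest-descent coefficient `c₂₀(n) = Q₂(a₀(n), λ₀(n)) χ(n)²/(216 (1 + 2 a₀(n))⁶)`
satisfies `c₂₀(n) → (1/54)(log x)²` as `n → ∞`. -/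
theorem c20_limit (x : ℝ) (hx : 1 < x) (r : ℕ → ℝ)
    (hr : ∀ n : ℕ, 1 ≤ n → 0 < r n ∧ r n * (Real.exp (r n) + x) = 2 * n * x * Real.log x)
    (lam0 a0 chi c20 : ℕ → ℝ)
    (hlam : ∀ n : ℕ, lam0 n = x * Real.exp (-(r n)))
    (ha : ∀ n : ℕ, a0 n = (1 + lam0 n) ^ 2 / (4 * n * lam0 n * Real.log x))
    (hchi : ∀ n : ℕ, chi n = Real.log n / (n * lam0 n))
    (hc : ∀ n : ℕ, c20 n = Q2 (a0 n) (lam0 n) * (chi n) ^ 2 / (216 * (1 + 2 * a0 n) ^ 6)) :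
    Tendsto c20 atTop (nhds ((1 / 54) * (Real.log x) ^ 2)) := by
  have hx0 : 0 < x := zero_lt_one.trans hx
  have hL : 0 < log x := log_pos hx
  have hr_eventually := eventually_atTop.2 ⟨1, hr⟩
  have hr_top : Tendsto r atTop atTop :=
    tendsto_atTop_of_mul_exp_add_eq hx0.le (by positivity : 0 < 2 * x * log x)
      (hr_eventually.mono fun n hn => ⟨hn.1.le, by rw [hn.2]; ring⟩)
  have hlam_ne : ∀ n, 1 + lam0 n ≠ 0 := fun n => by rw [hlam n]; positivity
  have hlam_lim : Tendsto lam0 atTop (𝓝 0) := by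
    have h := (tendsto_exp_neg_atTop_nhds_zero.comp hr_top).const_mul x
    rw [mul_zero] at h
    exact h.congr fun n => (hlam n).symm
  have hrel : ∀ᶠ n : ℕ in atTop, 2 * n * log x * lam0 n = r n * (1 + lam0 n) :=
    hr_eventually.mono fun n hn => lam_relation (hlam n) hn.2
  have ha_lim : Tendsto a0 atTop (𝓝 0) := by
    have h := (hlam_lim.const_add 1).div_atTop (hr_top.const_mul_atTop two_pos)
    refine h.congr' ((hrel.and hr_eventually).mono fun n hn => ?_)
    rw [ha n, a0_eq_of_lam_relation hn.1 hn.2.1.ne' (hlam_ne n)]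
  have hlog_lim : Tendsto (fun n : ℕ => log n / r n) atTop (𝓝 1) := by
    have hc := (hlam_lim.const_add 1).div_const (2 * x * log x)
    have h := (tendsto_log_mul_div_self hr_top hc (by positivity)).const_add 1
    rw [add_zero] at h
    exact h.congr' (hr_eventually.mono fun n hn => (log_div_eq hx0 hL hn.1 (hlam n) hn.2).symm)
  have hchi_lim : Tendsto chi atTop (𝓝 (2 * log x)) := by
    have h := ((hlam_lim.const_add 1).inv₀ (by norm_num)).const_mul (2 * log x) |>.mul hlog_lim
    simp only [add_zero, inv_one, mul_one] at h
    refine h.congr' ((hrel.and hr_eventually).mono fun n hn => ?_)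
    rw [hchi n, chi_eq_of_lam_relation hn.1 hn.2.1.ne' hL.ne' (hlam_ne n),
      div_eq_mul_inv (2 * log x)]
  convert (tendsto_c20_form ha_lim hlam_lim hchi_lim).congr fun n => (hc n).symm using 2
  ring
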